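/- arXiv:1602.02984 — 8 statements merged into one kernel-verified Lean document; each statement's English description precedes it below -/
import Mathlib

section
/- Let F be a nonempty finite set of points in ℂ. Then ∑_{z∈F} ∑_{w∈F, w≠z} ( log|z − w| − log max{1,|z|} − log max{1,|w|} ) ≤ (#F) · log(#F). -/
/-!
Enumerate `F` as `z₀, …, z_{N-1}`. The product `∏_{i ≠ j} ‖zᵢ - zⱼ‖` is `‖det V‖²` for the
Vandermonde matrix `V = (zᵢ ^ j)`. Dividing row `i` of `V` by `max 1 ‖zᵢ‖ ^ (N - 1)` leaves a
matrix `B` with entries of norm at most `1`, and `‖det B‖² ≤ N ^ N`: the determinant of the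
positive semidefinite matrix `B Bᴴ` is the product of its eigenvalues, which AM-GM bounds by
`(tr (B Bᴴ) / N) ^ N ≤ N ^ N`. Taking logarithms gives the estimate.
-/

open Finset
open scoped ComplexOrder

namespace Finset

theorem prod_prod_erase_mul {α M : Type*} [DecidableEq α] [CommMonoid M] (s : Finset α)
    (g : α → M) :
    ∏ x ∈ s, ∏ y ∈ s.erase x, g x * g y = (∏ x ∈ s, g x) ^ (2 * (#s - 1)) := by
  have hswap : ∏ x ∈ s, ∏ y ∈ s.erase x, g y = ∏ y ∈ s, ∏ x ∈ s.erase y, g y :=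
    prod_comm' fun x y => by simp only [mem_erase]; tauto
  have hconst : ∏ x ∈ s, ∏ _y ∈ s.erase x, g x = (∏ x ∈ s, g x) ^ (#s - 1) := by
    rw [← prod_pow]
    exact prod_congr rfl fun x hx => by rw [prod_const, card_erase_of_mem hx]
  simp_rw [prod_mul_distrib]
  rw [hswap, hconst, ← pow_add, two_mul]

theorem prod_prod_erase_map {ι α M : Type*} [DecidableEq ι] [DecidableEq α] [CommMonoid M]
    (s : Finset ι) (e : ι ↪ α) (f : α → α → M) :
    ∏ x ∈ s.map e, ∏ y ∈ (s.map e).erase x, f x y = ∏ i ∈ s, ∏ j ∈ s.erase i, f (e i) (e j) := by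
  simp_rw [prod_map, ← map_erase, prod_map]

end Finset

theorem Real.prod_le_sum_div_card_pow {ι : Type*} (s : Finset ι) (f : ι → ℝ)
    (hf : ∀ i ∈ s, 0 ≤ f i) : ∏ i ∈ s, f i ≤ ((∑ i ∈ s, f i) / #s) ^ #s := by
  rcases s.eq_empty_or_nonempty with rfl | hs
  · simp
  have hcard : (#s : ℝ) ≠ 0 := by positivity
  have hamgm := Real.geom_mean_le_arith_mean_weighted s (fun _ => (#s : ℝ)⁻¹) f
    (fun _ _ => by positivity) (by simp [hcard]) hf
  rw [Real.finsetProd_rpow s f hf, ← Finset.mul_sum, inv_mul_eq_div] at hamgm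
  calc ∏ i ∈ s, f i = ((∏ i ∈ s, f i) ^ (#s : ℝ)⁻¹) ^ #s :=
        (Real.rpow_inv_natCast_pow (prod_nonneg hf) hs.card_pos.ne').symm
    _ ≤ ((∑ i ∈ s, f i) / #s) ^ #s := by
        gcongr; exact Real.rpow_nonneg (prod_nonneg hf) _

namespace Matrix

variable {𝕜 n : Type*} [RCLike 𝕜] [Fintype n]

theorem re_trace_mul_conjTranspose_self {m : Type*} [Fintype m] (B : Matrix n m 𝕜) :
    RCLike.re (B * Bᴴ).trace = ∑ i, ∑ j, ‖B i j‖ ^ 2 := by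
  simp [trace, mul_apply, RCLike.mul_conj]

variable [DecidableEq n]

theorem PosSemidef.re_det_le_re_trace_div_card_pow {A : Matrix n n 𝕜} (hA : A.PosSemidef) :
    RCLike.re A.det ≤ (RCLike.re A.trace / Fintype.card n) ^ Fintype.card n := by
  rw [hA.isHermitian.det_eq_prod_eigenvalues, hA.isHermitian.trace_eq_sum_eigenvalues,
    ← RCLike.ofReal_prod, ← RCLike.ofReal_sum, RCLike.ofReal_re, RCLike.ofReal_re]
  exact Real.prod_le_sum_div_card_pow _ _ fun i _ => hA.eigenvalues_nonneg i

theorem norm_det_sq_le_card_pow_card (B : Matrix n n 𝕜) (hB : ∀ i j, ‖B i j‖ ≤ 1) :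
    ‖B.det‖ ^ 2 ≤ (Fintype.card n : ℝ) ^ Fintype.card n := by
  have hdet : RCLike.re (B * Bᴴ).det = ‖B.det‖ ^ 2 := by
    simp [det_mul, det_conjTranspose, RCLike.mul_conj]
  have htrace : RCLike.re (B * Bᴴ).trace ≤ Fintype.card n * Fintype.card n := by
    rw [re_trace_mul_conjTranspose_self]
    calc ∑ i, ∑ j, ‖B i j‖ ^ 2 ≤ ∑ _i : n, ∑ _j : n, (1 : ℝ) := by
          gcongr with i _ j _; exact pow_le_one₀ (norm_nonneg _) (hB i j)
      _ = Fintype.card n * Fintype.card n := by simp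
  rw [← hdet]
  refine (posSemidef_self_mul_conjTranspose B).re_det_le_re_trace_div_card_pow.trans ?_
  gcongr
  · rw [re_trace_mul_conjTranspose_self]; positivity
  · exact div_le_of_le_mul₀ (by positivity) (by positivity) htrace

theorem norm_det_vandermonde_sq_le {N : ℕ} (v : Fin N → 𝕜) :
    ‖(vandermonde v).det‖ ^ 2 ≤ (N : ℝ) ^ N * ∏ i, max 1 ‖v i‖ ^ (2 * (N - 1)) := by
  set m : Fin N → ℝ := fun i => max 1 ‖v i‖
  have hm : ∀ i, 1 ≤ m i := fun i => le_max_left _ _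
  set c : Fin N → 𝕜 := fun i => (m i : 𝕜) ^ (N - 1)
  have hc : ∀ i, ‖c i‖ = m i ^ (N - 1) := fun i => by
    simp [c, abs_of_pos (zero_lt_one.trans_le (hm i))]
  have hc0 : ∀ i, c i ≠ 0 := fun i => by
    rw [← norm_ne_zero_iff, hc]; exact (pow_pos (zero_lt_one.trans_le (hm i)) _).ne'
  set B : Matrix (Fin N) (Fin N) 𝕜 := of fun i j => (c i)⁻¹ * v i ^ (j : ℕ)
  have hB : ∀ i j, ‖B i j‖ ≤ 1 := fun i j => by
    simp only [B, of_apply]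
    rw [norm_mul, norm_inv, hc, norm_pow, inv_mul_le_one₀ (by positivity)]
    calc ‖v i‖ ^ (j : ℕ) ≤ m i ^ (j : ℕ) := by gcongr; exact le_max_right _ _
      _ ≤ m i ^ (N - 1) := pow_le_pow_right₀ (hm i) (by omega)
  have hV : vandermonde v = of fun i j => c i * B i j := by
    ext i j; simp [B, mul_inv_cancel_left₀ (hc0 i)]
  rw [hV, det_mul_column, norm_mul, mul_pow, norm_prod, ← prod_pow, mul_comm]
  gcongr
  · exact norm_det_sq_le_card_pow_card B hB |>.trans_eq (by simp)
  · rw [hc, ← pow_mul, mul_comm]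

theorem norm_det_vandermonde_sq {N : ℕ} (v : Fin N → 𝕜) :
    ‖(vandermonde v).det‖ ^ 2 = ∏ i, ∏ j ∈ univ.erase i, ‖v i - v j‖ := by
  calc ‖(vandermonde v).det‖ ^ 2 = ∏ i, ∏ j ∈ Ioi i, ‖v j - v i‖ * ‖v i - v j‖ := by
        simp_rw [det_vandermonde, norm_prod, sq, ← prod_mul_distrib, norm_sub_rev (v _) (v _)]
    _ = ∏ i, ∏ j ∈ {i}ᶜ, ‖v j - v i‖ :=
        prod_prod_Ioi_mul_eq_prod_prod_off_diag fun a b => ‖v a - v b‖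
    _ = ∏ i, ∏ j ∈ univ.erase i, ‖v i - v j‖ := by
        simp_rw [compl_eq_univ_sdiff, sdiff_singleton_eq_erase, norm_sub_rev (v _) (v _)]

end Matrix

namespace Finset

variable {𝕜 : Type*} [RCLike 𝕜]

theorem prod_prod_erase_norm_sub_le (F : Finset 𝕜) :
    ∏ z ∈ F, ∏ w ∈ F.erase z, ‖z - w‖ ≤ (#F : ℝ) ^ #F * ∏ z ∈ F, max 1 ‖z‖ ^ (2 * (#F - 1)) := by
  let e : Fin #F ↪ 𝕜 := F.equivFin.symm.toEmbedding.trans (Function.Embedding.subtype _)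
  have hF : univ.map e = F := by
    rw [← map_map, map_univ_equiv, univ_eq_attach, attach_map_val]
  have hlhs := prod_prod_erase_map univ e fun z w => ‖z - w‖
  have hrhs := prod_map univ e fun z => max 1 ‖z‖ ^ (2 * (#F - 1))
  rw [hF] at hlhs hrhs
  rw [hlhs, hrhs, ← Matrix.norm_det_vandermonde_sq]
  exact Matrix.norm_det_vandermonde_sq_le e

theorem prod_prod_erase_norm_sub_div_le (F : Finset 𝕜) :
    ∏ z ∈ F, ∏ w ∈ F.erase z, ‖z - w‖ / (max 1 ‖z‖ * max 1 ‖w‖) ≤ (#F : ℝ) ^ #F := by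
  simp_rw [prod_div_distrib]
  rw [prod_prod_erase_mul, ← prod_pow, div_le_iff₀ (by positivity)]
  exact prod_prod_erase_norm_sub_le F

end Finset

theorem mahler_estimate_general (F : Finset ℂ) :
    ∑ z ∈ F, ∑ w ∈ F.erase z,
      (Real.log (‖z - w‖) - Real.log (max 1 (‖z‖))
        - Real.log (max 1 (‖w‖)))
      ≤ (F.card : ℝ) * Real.log (F.card : ℝ) := by
  have hdist : ∀ z ∈ F, ∀ w ∈ F.erase z, 0 < ‖z - w‖ := fun z _ w hw =>
    norm_pos_iff.mpr (sub_ne_zero.mpr (ne_of_mem_erase hw).symm)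
  have hpos : ∀ z ∈ F, ∀ w ∈ F.erase z, 0 < ‖z - w‖ / (max 1 ‖z‖ * max 1 ‖w‖) :=
    fun z hz w hw => div_pos (hdist z hz w hw) (by positivity)
  calc _ = ∑ z ∈ F, ∑ w ∈ F.erase z, Real.log (‖z - w‖ / (max 1 ‖z‖ * max 1 ‖w‖)) := by
        refine sum_congr rfl fun z hz => sum_congr rfl fun w hw => ?_
        rw [Real.log_div (hdist z hz w hw).ne' (by positivity),
          Real.log_mul (by positivity) (by positivity)]
        ring
    _ = Real.log (∏ z ∈ F, ∏ w ∈ F.erase z, ‖z - w‖ / (max 1 ‖z‖ * max 1 ‖w‖)) := by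
        rw [Real.log_prod fun z hz => (prod_pos (hpos z hz)).ne']
        exact sum_congr rfl fun z hz => (Real.log_prod fun w hw => (hpos z hz w hw).ne').symm
    _ ≤ Real.log ((#F : ℝ) ^ #F) :=
        Real.log_le_log (prod_pos fun z hz => prod_pos (hpos z hz))
          (prod_prod_erase_norm_sub_div_le F)
    _ = #F * Real.log #F := Real.log_pow _ _

/-- **Mahler's estimate** (eq. (1)): for a nonempty finite set `F ⊆ ℂ`,
`∑_{z∈F} ∑_{w∈F, w≠z} (log|z−w| − log max{1,|z|} − log max{1,|w|}) ≤ #F · log #F`. -/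
theorem mahler_estimate (F : Finset ℂ) (hF : F.Nonempty) :
    ∑ z ∈ F, ∑ w ∈ F.erase z,
      (Real.log (‖z - w‖) - Real.log (max 1 (‖z‖))
        - Real.log (max 1 (‖w‖)))
      ≤ (F.card : ℝ) * Real.log (F.card : ℝ) :=
  mahler_estimate_general F
end

section
/- For every integer N ≥ 1, let F_N := {z ∈ ℂ : z^N = 1} be the set of N-th roots of unity. Then ∑_{z∈F_N} ∑_{w∈F_N, w≠z} ( log|z − w| − log max{1,|z|} − log max{1,|w|} ) = N · log N. In particular Mahler's estimate is attained with equality on F_N. -/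
/-!
Every `N`-th root of unity has absolute value `1`, so the `max` terms vanish. For a fixed
root `z`, differentiating `X ^ N - 1 = ∏_w (X - w)` and evaluating at `z` gives
`∏_{w ≠ z} (z - w) = N z^(N-1)`, whose absolute value is `N`; hence each of the `N` inner
sums equals `log N`.
-/

open Polynomial Finset

theorem IsPrimitiveRoot.prod_erase_sub_eq_mul_pow {R : Type*} [CommRing R] [IsDomain R]
    [DecidableEq R] {ζ : R} {n : ℕ} (hζ : IsPrimitiveRoot ζ n) (hn : 0 < n) {z : R}
    (hz : z ∈ nthRootsFinset n (1 : R)) :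
    ∏ w ∈ (nthRootsFinset n (1 : R)).erase z, (z - w) = n * z ^ (n - 1) := by
  have hderiv := congrArg (fun p ↦ eval z (derivative p)) (X_pow_sub_one_eq_prod hn hζ)
  simp only [derivative_sub, derivative_one, derivative_X_pow, sub_zero, eval_mul, eval_C,
    eval_pow, eval_X] at hderiv
  rw [hderiv]
  exact (eval_multiset_prod_X_sub_C_derivative hz).symm

theorem Complex.norm_eq_one_of_mem_nthRootsFinset {n : ℕ} (hn : 0 < n) {z : ℂ}
    (hz : z ∈ nthRootsFinset n (1 : ℂ)) : ‖z‖ = 1 :=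
  norm_eq_one_of_pow_eq_one ((mem_nthRootsFinset hn 1).mp hz) hn.ne'

theorem Complex.sum_erase_log_norm_sub_of_mem_nthRootsFinset {n : ℕ} (hn : 0 < n) {z : ℂ}
    (hz : z ∈ nthRootsFinset n (1 : ℂ)) :
    ∑ w ∈ (nthRootsFinset n (1 : ℂ)).erase z, Real.log ‖z - w‖ = Real.log n := by
  have hne : ∀ w ∈ (nthRootsFinset n (1 : ℂ)).erase z, ‖z - w‖ ≠ 0 := fun w hw ↦ by
    simpa [sub_eq_zero] using (ne_of_mem_erase hw).symm
  rw [← Real.log_prod hne, ← norm_prod,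
    (Complex.isPrimitiveRoot_exp n hn.ne').prod_erase_sub_eq_mul_pow hn hz,
    norm_mul, norm_pow, norm_eq_one_of_mem_nthRootsFinset hn hz, one_pow, mul_one,
    Complex.norm_natCast]

/-- For `N ≥ 1` and `F` the set of `N`-th roots of unity in `ℂ`, the Fekete sum
`∑_{z∈F} ∑_{w∈F, w≠z} (log|z−w| − log max{1,|z|} − log max{1,|w|})` equals `N · log N`,
so Mahler's estimate is attained with equality. -/
theorem fekete_sum_roots_of_unity (N : ℕ) (hN : 1 ≤ N) (F : Finset ℂ)
    (hF : ∀ z : ℂ, z ∈ F ↔ z ^ N = 1) :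
    ∑ z ∈ F, ∑ w ∈ F.erase z,
      (Real.log (‖z - w‖) - Real.log (max 1 ‖z‖)
        - Real.log (max 1 ‖w‖))
      = (N : ℝ) * Real.log (N : ℝ) := by
  obtain rfl : F = nthRootsFinset N (1 : ℂ) := by
    ext z
    rw [hF, mem_nthRootsFinset hN]
  calc _ = ∑ z ∈ nthRootsFinset N (1 : ℂ), Real.log N := by
        refine sum_congr rfl fun z hz ↦ ?_
        rw [← Complex.sum_erase_log_norm_sub_of_mem_nthRootsFinset hN hz]
        refine sum_congr rfl fun w hw ↦ ?_
        simp [Complex.norm_eq_one_of_mem_nthRootsFinset hN hz,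
          Complex.norm_eq_one_of_mem_nthRootsFinset hN (mem_of_mem_erase hw)]
    _ = N * Real.log N := by
      rw [sum_const, (Complex.isPrimitiveRoot_exp N (by omega)).card_nthRootsFinset, nsmul_eq_mul]
end

section
/- Define g₀ : ℂ → ℝ by g₀(z) := log max{1,|z|} − (1/2)·log(1+|z|²). Then g₀ is Lipschitz continuous with respect to the normalized chordal metric: there exists C ≥ 0 such that for all z, w ∈ ℂ, |g₀(z) − g₀(w)| ≤ C · [z,w]. -/
/-!
With `r = |z|`, the weight is `g₀(z) = log (max 1 r / √(1 + r²)) = log max([z,∞], [z,0])`, since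
`[z,∞] = 1 / √(1 + r²)` and `[z,0] = r / √(1 + r²)`. Each of the two chordal distances changes by at
most `|r - s| / (√(1 + r²) √(1 + s²)) ≤ [z,w]` when `z` moves to `w` with `|w| = s`, hence so does
their maximum; the maximum is at least `1/2`, and `log` is `2`-Lipschitz on `[1/2, ∞)`.
-/

open Real

/-- The normalized chordal metric on `ℂ ⊆ ℙ¹(ℂ)`:
`[z,w] = |z−w| / (√(1+|z|²)·√(1+|w|²))`. -/
noncomputable def chordalMetric (z w : ℂ) : ℝ :=
  ‖z - w‖ /
    (Real.sqrt (1 + ‖z‖ ^ 2) * Real.sqrt (1 + ‖w‖ ^ 2))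

lemma abs_sub_le_of_sq_sub_sq_eq {X Y u v : ℝ} (hX : 0 ≤ X) (hY : 0 ≤ Y)
    (hsq : X ^ 2 - Y ^ 2 = u ^ 2 - v ^ 2) (huv : |u + v| ≤ X + Y) : |X - Y| ≤ |u - v| := by
  rcases (add_nonneg hX hY).eq_or_lt with hXY | hXY
  · have hX0 : X = 0 := by linarith
    have hY0 : Y = 0 := by linarith
    simp [hX0, hY0]
  · have hprod : |X - Y| * (X + Y) = |u - v| * |u + v| := by
      rw [← abs_of_pos hXY, ← abs_mul, ← abs_mul]
      congr 1
      linear_combination hsq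
    refine le_of_mul_le_mul_right ?_ hXY
    rw [hprod]
    exact mul_le_mul_of_nonneg_left huv (abs_nonneg _)

lemma abs_sqrt_one_add_sq_sub_le (r s : ℝ) : |√(1 + r ^ 2) - √(1 + s ^ 2)| ≤ |r - s| := by
  have hr : |r| ≤ √(1 + r ^ 2) := by
    rw [← sqrt_sq_eq_abs]; exact sqrt_le_sqrt (by linarith)
  have hs : |s| ≤ √(1 + s ^ 2) := by
    rw [← sqrt_sq_eq_abs]; exact sqrt_le_sqrt (by linarith)
  refine abs_sub_le_of_sq_sub_sq_eq (sqrt_nonneg _) (sqrt_nonneg _) ?_ ?_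
  · rw [sq_sqrt (by positivity), sq_sqrt (by positivity)]; ring
  · exact (abs_add_le r s).trans (add_le_add hr hs)

lemma abs_mul_sqrt_one_add_sq_sub_le {r s : ℝ} (hr : 0 ≤ r) (hs : 0 ≤ s) :
    |r * √(1 + s ^ 2) - s * √(1 + r ^ 2)| ≤ |r - s| := by
  have hA : 1 ≤ √(1 + r ^ 2) := one_le_sqrt.2 (by nlinarith)
  have hB : 1 ≤ √(1 + s ^ 2) := one_le_sqrt.2 (by nlinarith)
  refine abs_sub_le_of_sq_sub_sq_eq (by positivity) (by positivity) ?_ ?_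
  · rw [mul_pow, mul_pow, sq_sqrt (by positivity), sq_sqrt (by positivity)]; ring
  · rw [abs_of_nonneg (add_nonneg hr hs)]
    exact add_le_add (le_mul_of_one_le_right hr hB) (le_mul_of_one_le_right hs hA)

noncomputable def chordalWeight (r : ℝ) : ℝ := max 1 r / √(1 + r ^ 2)

lemma abs_chordalWeight_sub_le {r s : ℝ} (hr : 0 ≤ r) (hs : 0 ≤ s) :
    |chordalWeight r - chordalWeight s| ≤ |r - s| / (√(1 + r ^ 2) * √(1 + s ^ 2)) := by
  have hA : 0 < √(1 + r ^ 2) := sqrt_pos.2 (by positivity)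
  have hB : 0 < √(1 + s ^ 2) := sqrt_pos.2 (by positivity)
  have hinf : |1 / √(1 + r ^ 2) - 1 / √(1 + s ^ 2)|
      ≤ |r - s| / (√(1 + r ^ 2) * √(1 + s ^ 2)) := by
    rw [div_sub_div _ _ hA.ne' hB.ne', abs_div, abs_of_pos (mul_pos hA hB), one_mul, mul_one,
      abs_sub_comm r s]
    exact div_le_div_of_nonneg_right (abs_sqrt_one_add_sq_sub_le s r) (by positivity)
  have hzero : |r / √(1 + r ^ 2) - s / √(1 + s ^ 2)|
      ≤ |r - s| / (√(1 + r ^ 2) * √(1 + s ^ 2)) := by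
    rw [div_sub_div _ _ hA.ne' hB.ne', abs_div, abs_of_pos (mul_pos hA hB), mul_comm _ s]
    exact div_le_div_of_nonneg_right (abs_mul_sqrt_one_add_sq_sub_le hr hs) (by positivity)
  unfold chordalWeight
  rw [← max_div_div_right hA.le, ← max_div_div_right hB.le]
  exact (abs_max_sub_max_le_max _ _ _ _).trans (max_le hinf hzero)

lemma one_half_le_chordalWeight {r : ℝ} (hr : 0 ≤ r) : 1 / 2 ≤ chordalWeight r := by
  have hA : 0 < √(1 + r ^ 2) := sqrt_pos.2 (by positivity)
  have hsqrt : √(1 + r ^ 2) ≤ 1 + r := sqrt_le_iff.2 ⟨by linarith, by nlinarith⟩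
  rw [chordalWeight, le_div_iff₀ hA]
  linarith [le_max_left 1 r, le_max_right 1 r]

lemma log_chordalWeight (r : ℝ) :
    log (chordalWeight r) = log (max 1 r) - 1 / 2 * log (1 + r ^ 2) := by
  have hmax : 0 < max 1 r := lt_max_of_lt_left one_pos
  rw [chordalWeight, log_div hmax.ne' (sqrt_pos.2 (by positivity)).ne', log_sqrt (by positivity)]
  ring

lemma log_sub_log_le_div {x y : ℝ} (hx : 0 < x) (hy : 0 < y) : log x - log y ≤ (x - y) / y := by
  rw [← log_div hx.ne' hy.ne', sub_div, div_self hy.ne']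
  exact log_le_sub_one_of_pos (div_pos hx hy)

lemma abs_log_sub_log_le_of_le {a x y : ℝ} (ha : 0 < a) (hx : a ≤ x) (hy : a ≤ y) :
    |log x - log y| ≤ |x - y| / a := by
  have key : ∀ {x y : ℝ}, a ≤ x → a ≤ y → log x - log y ≤ |x - y| / a := by
    intro x y hx hy
    refine (log_sub_log_le_div (ha.trans_le hx) (ha.trans_le hy)).trans ?_
    rcases le_total y x with hxy | hxy
    · rw [abs_of_nonneg (sub_nonneg.2 hxy)]
      exact div_le_div_of_nonneg_left (sub_nonneg.2 hxy) ha hy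
    · exact (div_nonpos_of_nonpos_of_nonneg (sub_nonpos.2 hxy) (ha.trans_le hy).le).trans
        (by positivity)
  rw [abs_sub_le_iff]
  exact ⟨key hx hy, abs_sub_comm x y ▸ key hy hx⟩

lemma abs_norm_sub_norm_div_le_chordalMetric (z w : ℂ) :
    |‖z‖ - ‖w‖| / (√(1 + ‖z‖ ^ 2) * √(1 + ‖w‖ ^ 2)) ≤ chordalMetric z w :=
  div_le_div_of_nonneg_right (abs_norm_sub_norm_le z w) (by positivity)

/-- The weight `g₀(z) = log max{1,|z|} − (1/2)·log(1+|z|²)` is Lipschitz continuous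
with respect to the normalized chordal metric on `ℂ`. -/
theorem g0_lipschitz_chordal :
    ∃ C : ℝ, 0 ≤ C ∧ ∀ z w : ℂ,
      |(Real.log (max 1 (‖z‖)) - (1 / 2) * Real.log (1 + ‖z‖ ^ 2))
        - (Real.log (max 1 (‖w‖)) - (1 / 2) * Real.log (1 + ‖w‖ ^ 2))|
        ≤ C * chordalMetric z w := by
  refine ⟨2, zero_le_two, fun z w => ?_⟩
  rw [← log_chordalWeight, ← log_chordalWeight]
  calc |log (chordalWeight ‖z‖) - log (chordalWeight ‖w‖)|
      ≤ |chordalWeight ‖z‖ - chordalWeight ‖w‖| / (1 / 2) :=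
        abs_log_sub_log_le_of_le one_half_pos (one_half_le_chordalWeight (norm_nonneg z))
          (one_half_le_chordalWeight (norm_nonneg w))
    _ = 2 * |chordalWeight ‖z‖ - chordalWeight ‖w‖| := by ring
    _ ≤ 2 * chordalMetric z w := by
        gcongr
        exact (abs_chordalWeight_sub_le (norm_nonneg z) (norm_nonneg w)).trans
          (abs_norm_sub_norm_div_le_chordalMetric z w)
end

section
/- Let K be a field equipped with a multiplicative nonarchimedean (ultrametric) absolute value ‖·‖. Fix an integer d ≥ 2 and λ ∈ K with ‖λ‖ > 1, and let f_λ : K → K be f_λ(z) := z^d + λ. Then for every z ∈ K and every n ∈ ℕ, max{1, ‖z‖} ≤ ‖λ‖^{1/d} · max{1, ‖f_λ^{∘n}(z)‖}, where f_λ^{∘n} denotes the n-fold iterate of f_λ and ‖λ‖^{1/d} is the real d-th root. -/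
/-- Estimate (eq:image): over a field with a multiplicative nonarchimedean absolute
value, for `d ≥ 2`, `‖λ‖ > 1`, `f_λ(z) = z^d + λ`, every `z ∈ K` and `n ∈ ℕ`,
`max{1,‖z‖} ≤ ‖λ‖^{1/d} · max{1,‖f_λ^{∘n}(z)‖}`. -/
theorem max_one_norm_le_rpow_mul_iterate {K : Type*} [NormedField K]
    (hultra : ∀ x y : K, ‖x + y‖ ≤ max ‖x‖ ‖y‖)
    (d : ℕ) (hd : 2 ≤ d) (lam : K) (hlam : 1 < ‖lam‖) (z : K) (n : ℕ) :
    max 1 ‖z‖ ≤ ‖lam‖ ^ ((1 : ℝ) / d) *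
      max 1 ‖(fun w : K => w ^ d + lam)^[n] z‖ := by
  set r := ‖lam‖ ^ ((1 : ℝ) / d) with hr
  have hdne : d ≠ 0 := by omega
  have hr1 : (1 : ℝ) ≤ r := Real.one_le_rpow hlam.le (by positivity)
  have hrd : r ^ d = ‖lam‖ := by
    rw [hr, ← Real.rpow_natCast (‖lam‖ ^ ((1:ℝ)/d)) d, ← Real.rpow_mul (by positivity)]
    rw [show (1:ℝ)/d * d = 1 by field_simp]
    exact Real.rpow_one _
  have key : ∀ a b : K, ‖b‖ < ‖a‖ → ‖a + b‖ = ‖a‖ := by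
    intro a b h
    refine le_antisymm ((hultra a b).trans (by rw [max_eq_left h.le])) ?_
    have h2 : ‖a‖ ≤ max ‖a + b‖ ‖b‖ := by
      have := hultra (a + b) (-b); simpa using this
    exact (le_max_iff.mp h2).resolve_right (not_le.mpr h)
  induction n generalizing z with
  | zero =>
    simp only [Function.iterate_zero, id_eq]
    exact le_mul_of_one_le_left (le_max_of_le_left zero_le_one) hr1
  | succ n ih =>
    rcases le_or_gt ‖z‖ r with hz | hz
    · calc max 1 ‖z‖ ≤ r := max_le hr1 hz
        _ ≤ r * max 1 ‖(fun w : K => w ^ d + lam)^[n+1] z‖ :=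
          le_mul_of_one_le_right (by linarith) (le_max_left _ _)
    · have hz1 : (1:ℝ) < ‖z‖ := lt_of_le_of_lt hr1 hz
      have hfz : ‖z ^ d + lam‖ = ‖z‖ ^ d := by
        rw [key (z ^ d) lam ?_, norm_pow]
        rw [norm_pow, ← hrd]
        exact pow_lt_pow_left₀ hz (le_trans zero_le_one hr1) hdne
      have hge : ‖z‖ ≤ ‖z ^ d + lam‖ := by
        rw [hfz]; exact le_self_pow₀ hz1.le hdne
      calc max 1 ‖z‖ ≤ max 1 ‖z ^ d + lam‖ := max_le_max le_rfl hge
        _ ≤ r * max 1 ‖(fun w : K => w ^ d + lam)^[n] (z ^ d + lam)‖ := ih _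
        _ = r * max 1 ‖(fun w : K => w ^ d + lam)^[n+1] z‖ := by
          rw [Function.iterate_succ_apply]
end

section
/- Let K be a field equipped with a multiplicative nonarchimedean (ultrametric) absolute value ‖·‖. Fix an integer d ≥ 2 and λ ∈ K with ‖λ‖ > 1, and let f_λ : K → K be f_λ(z) := z^d + λ. If n ≥ 1 and z ∈ K satisfies f_λ^{∘n}(z) = z (where f_λ^{∘n} is the n-fold iterate), then ‖z‖^d = ‖λ‖, i.e. ‖z‖ = ‖λ‖^{1/d}. -/
private lemma ultra_add_eq {K : Type*} [NormedField K]
    (hultra : ∀ x y : K, ‖x + y‖ ≤ max ‖x‖ ‖y‖)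
    {a b : K} (h : ‖b‖ < ‖a‖) : ‖a + b‖ = ‖a‖ := by
  refine le_antisymm ((hultra a b).trans (by simp [le_of_lt h])) ?_
  have h2 : ‖a‖ ≤ max ‖a + b‖ ‖b‖ := by
    have := hultra (a + b) (-b)
    simpa using this
  rcases max_cases ‖a + b‖ ‖b‖ with ⟨he, _⟩ | ⟨he, _⟩
  · rwa [he] at h2
  · rw [he] at h2; exact absurd h2 (not_le.2 h)

private lemma iter_grow {K : Type*} [NormedField K]
    (hultra : ∀ x y : K, ‖x + y‖ ≤ max ‖x‖ ‖y‖)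
    (d : ℕ) (hd : 2 ≤ d) (lam : K) (hlam : 1 < ‖lam‖) :
    ∀ m (w : K), ‖lam‖ < ‖w‖ ^ d →
      ‖lam‖ < ‖(fun w : K => w ^ d + lam)^[m] w‖ ^ d ∧
      ‖w‖ ≤ ‖(fun w : K => w ^ d + lam)^[m] w‖ := by
  intro m
  induction m with
  | zero => intro w h; simpa using h
  | succ m ih =>
    intro w h
    have hw1 : 1 < ‖w‖ := by
      by_contra hle
      push_neg at hle
      have : ‖w‖ ^ d ≤ 1 := pow_le_one₀ (norm_nonneg w) hle
      linarith
    have hfw : ‖w ^ d + lam‖ = ‖w‖ ^ d := by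
      rw [ultra_add_eq hultra (by rwa [norm_pow]), norm_pow]
    have hfw' : ‖lam‖ < ‖w ^ d + lam‖ ^ d := by
      rw [hfw]
      calc ‖lam‖ < ‖w‖ ^ d := h
        _ ≤ (‖w‖ ^ d) ^ d := le_self_pow₀ (one_le_pow₀ hw1.le) (by omega)
    obtain ⟨h1, h2⟩ := ih (w ^ d + lam) hfw'
    rw [Function.iterate_succ_apply]
    refine ⟨h1, le_trans ?_ h2⟩
    rw [hfw]
    exact le_self_pow₀ hw1.le (by omega)

/-- Periodic points of `f_λ(z) = z^d + λ` (with `‖λ‖ > 1`, nonarchimedean) lie on the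
sphere `‖z‖ = ‖λ‖^{1/d}`: if `f_λ^{∘n}(z) = z` with `n ≥ 1`, then `‖z‖^d = ‖λ‖`. -/
theorem periodic_point_norm_pow_eq {K : Type*} [NormedField K]
    (hultra : ∀ x y : K, ‖x + y‖ ≤ max ‖x‖ ‖y‖)
    (d : ℕ) (hd : 2 ≤ d) (lam : K) (hlam : 1 < ‖lam‖)
    (n : ℕ) (hn : 1 ≤ n) (z : K) (hz : (fun w : K => w ^ d + lam)^[n] z = z) :
    ‖z‖ ^ d = ‖lam‖ := by
  obtain ⟨m, rfl⟩ : ∃ m, n = m + 1 := ⟨n - 1, by omega⟩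
  rcases lt_trichotomy (‖z‖ ^ d) ‖lam‖ with h | h | h
  · -- ‖f z‖ = ‖λ‖, then grows, contradiction
    exfalso
    have hfz : ‖z ^ d + lam‖ = ‖lam‖ := by
      rw [add_comm]
      exact ultra_add_eq hultra (by rwa [norm_pow])
    have hfz' : ‖lam‖ < ‖z ^ d + lam‖ ^ d := by
      rw [hfz]
      exact lt_self_pow₀ hlam (by omega)
    obtain ⟨_, h2⟩ := iter_grow hultra d hd lam hlam m (z ^ d + lam) hfz'
    rw [Function.iterate_succ_apply] at hz
    rw [hz, hfz] at h2
    have hz1 : ‖z‖ < ‖lam‖ := by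
      by_contra hle
      push_neg at hle
      have : ‖lam‖ ≤ ‖z‖ ^ d :=
        hle.trans (le_self_pow₀ (hlam.le.trans hle) (by omega))
      linarith
    linarith
  · exact h
  · exfalso
    have hz1 : 1 < ‖z‖ := by
      by_contra hle
      push_neg at hle
      have : ‖z‖ ^ d ≤ 1 := pow_le_one₀ (norm_nonneg z) hle
      linarith
    have hfz : ‖z ^ d + lam‖ = ‖z‖ ^ d :=
      by rw [ultra_add_eq hultra (by rwa [norm_pow]), norm_pow]
    have hfz' : ‖lam‖ < ‖z ^ d + lam‖ ^ d := by
      rw [hfz]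
      calc ‖lam‖ < ‖z‖ ^ d := h
        _ ≤ (‖z‖ ^ d) ^ d := le_self_pow₀ (one_le_pow₀ hz1.le) (by omega)
    obtain ⟨_, h2⟩ := iter_grow hultra d hd lam hlam m (z ^ d + lam) hfz'
    rw [Function.iterate_succ_apply] at hz
    rw [hz, hfz] at h2
    have : ‖z‖ < ‖z‖ ^ d := lt_self_pow₀ hz1 (by omega)
    linarith
end

section
/- Let K be a field equipped with a multiplicative nonarchimedean (ultrametric) absolute value ‖·‖. Fix an integer d ≥ 2 with ‖(d : K)‖ = 1 (the image of d in K under the natural ring map ℕ → K has absolute value 1) and λ ∈ K with ‖λ‖ > 1, and let f_λ : K → K be f_λ(z) := z^d + λ. If n ≥ 1 and z ∈ K satisfies f_λ^{∘n}(z) = z, then the derivative of the n-fold iterate at z satisfies ‖(f_λ^{∘n})'(z)‖ = ‖λ‖^{n(d−1)/d} (real exponentiation), where (f_λ^{∘n})'(z) = ∏_{j=0}^{n−1} d·(f_λ^{∘j}(z))^{d−1} by the chain rule. -/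
/-!
If `‖λ‖ < ‖w‖ ^ d`, then `w ^ d` dominates `λ`, so `‖f_λ w‖ = ‖w‖ ^ d > ‖w‖` and the
norm grows strictly along the whole forward orbit; if `‖w‖ ^ d < ‖λ‖`, then
`‖f_λ w‖ = ‖λ‖` and `f_λ w` lies in the escaping region. Neither can happen on a cycle,
so every point of a cycle has norm `‖λ‖ ^ (1/d)`, and each factor of the multiplier
has norm `‖λ‖ ^ ((d-1)/d)`.
-/

open Function

namespace UnicriticalPolynomial

variable {K : Type*} [NormedField K] [IsUltrametricDist K] {d : ℕ} {lam : K}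

lemma norm_pow_add_of_norm_lt {w : K} (h : ‖lam‖ < ‖w‖ ^ d) : ‖w ^ d + lam‖ = ‖w‖ ^ d := by
  rw [IsUltrametricDist.norm_add_eq_max_of_norm_ne_norm (by rw [norm_pow]; exact h.ne'),
    norm_pow, max_eq_left h.le]

lemma norm_pow_add_of_lt_norm {w : K} (h : ‖w‖ ^ d < ‖lam‖) : ‖w ^ d + lam‖ = ‖lam‖ := by
  rw [IsUltrametricDist.norm_add_eq_max_of_norm_ne_norm (by rw [norm_pow]; exact h.ne),
    norm_pow, max_eq_right h.le]

lemma lt_norm_pow_add_of_norm_lt (hd : 2 ≤ d) (hlam : 1 ≤ ‖lam‖) {w : K}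
    (h : ‖lam‖ < ‖w‖ ^ d) :
    ‖w‖ < ‖w ^ d + lam‖ ∧ ‖lam‖ < ‖w ^ d + lam‖ ^ d := by
  have hw : 1 < ‖w‖ := by
    by_contra! hw
    exact (h.trans_le (pow_le_one₀ (norm_nonneg w) hw)).not_ge hlam
  have hgrow : ‖w‖ < ‖w ^ d + lam‖ := by
    rw [norm_pow_add_of_norm_lt h]
    exact lt_self_pow₀ hw (by omega)
  exact ⟨hgrow, h.trans (pow_lt_pow_left₀ hgrow (norm_nonneg w) (by omega))⟩

lemma strictMono_norm_iterate (hd : 2 ≤ d) (hlam : 1 ≤ ‖lam‖) {w : K}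
    (h : ‖lam‖ < ‖w‖ ^ d) : StrictMono fun k => ‖(fun w : K => w ^ d + lam)^[k] w‖ := by
  have hescape : ∀ k, ‖lam‖ < ‖(fun w : K => w ^ d + lam)^[k] w‖ ^ d := by
    intro k
    induction k with
    | zero => exact h
    | succ k ih =>
      rw [iterate_succ_apply']
      exact (lt_norm_pow_add_of_norm_lt hd hlam ih).2
  refine strictMono_nat_of_lt_succ fun k => ?_
  rw [iterate_succ_apply']
  exact (lt_norm_pow_add_of_norm_lt hd hlam (hescape k)).1

lemma not_isPeriodicPt_of_norm_lt (hd : 2 ≤ d) (hlam : 1 ≤ ‖lam‖) {n : ℕ} (hn : 0 < n)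
    {w : K} (h : ‖lam‖ < ‖w‖ ^ d) : ¬IsPeriodicPt (fun w : K => w ^ d + lam) n w := by
  intro hper
  have := strictMono_norm_iterate hd hlam h hn
  simp only [iterate_zero_apply, hper.eq] at this
  exact this.false

lemma norm_pow_eq_of_isPeriodicPt (hd : 2 ≤ d) (hlam : 1 < ‖lam‖) {n : ℕ} (hn : 0 < n)
    {w : K} (hper : IsPeriodicPt (fun w : K => w ^ d + lam) n w) : ‖w‖ ^ d = ‖lam‖ := by
  rcases lt_trichotomy (‖w‖ ^ d) ‖lam‖ with hlt | heq | hgt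
  · refine absurd hper.apply (not_isPeriodicPt_of_norm_lt hd hlam.le hn ?_)
    rw [norm_pow_add_of_lt_norm hlt]
    exact lt_self_pow₀ hlam (by omega)
  · exact heq
  · exact absurd hper (not_isPeriodicPt_of_norm_lt hd hlam.le hn hgt)

end UnicriticalPolynomial

open UnicriticalPolynomial in
/-- Multiplier of a periodic point: if `f_λ(z) = z^d + λ` with `d ≥ 2`, `‖(d:K)‖ = 1`,
`‖λ‖ > 1` over a nonarchimedean normed field, and `f_λ^{∘n}(z) = z` with `n ≥ 1`, then
`‖(f_λ^{∘n})'(z)‖ = ‖λ‖^{n(d−1)/d}`, where by the chain rule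
`(f_λ^{∘n})'(z) = ∏_{j=0}^{n−1} d·(f_λ^{∘j}(z))^{d−1}`. -/
theorem norm_multiplier_periodic_point {K : Type*} [NormedField K]
    (hultra : ∀ x y : K, ‖x + y‖ ≤ max ‖x‖ ‖y‖)
    (d : ℕ) (hd : 2 ≤ d) (hdnorm : ‖(d : K)‖ = 1)
    (lam : K) (hlam : 1 < ‖lam‖)
    (n : ℕ) (hn : 1 ≤ n) (z : K) (hz : (fun w : K => w ^ d + lam)^[n] z = z) :
    ‖∏ j ∈ Finset.range n, ((d : K) * ((fun w : K => w ^ d + lam)^[j] z) ^ (d - 1))‖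
      = ‖lam‖ ^ ((n : ℝ) * ((d : ℝ) - 1) / d) := by
  have : IsUltrametricDist K :=
    IsUltrametricDist.isUltrametricDist_of_forall_norm_add_le_max_norm hultra
  have hper : IsPeriodicPt (fun w : K => w ^ d + lam) n z := hz
  have horbit (j : ℕ) : ‖(fun w : K => w ^ d + lam)^[j] z‖ = ‖lam‖ ^ ((d : ℝ)⁻¹) := by
    rw [← norm_pow_eq_of_isPeriodicPt hd hlam hn (hper.apply_iterate j),
      Real.pow_rpow_inv_natCast (norm_nonneg _) (by omega)]
  have hfactor (j : ℕ) : ‖(d : K) * ((fun w : K => w ^ d + lam)^[j] z) ^ (d - 1)‖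
      = ‖lam‖ ^ (((d : ℝ) - 1) / d) := by
    rw [norm_mul, norm_pow, horbit, hdnorm, one_mul, ← Real.rpow_natCast, ← Real.rpow_mul
      (norm_nonneg _), Nat.cast_sub (by omega), Nat.cast_one, inv_mul_eq_div]
  rw [norm_prod, Finset.prod_congr rfl fun j _ => hfactor j, Finset.prod_const,
    Finset.card_range, ← Real.rpow_natCast, ← Real.rpow_mul (norm_nonneg _), mul_div_assoc,
    mul_comm]
end

section
/- Let K be an algebraically closed field equipped with a multiplicative nonarchimedean (ultrametric) absolute value ‖·‖. Fix an integer d ≥ 2 with ‖(d : K)‖ = 1 and λ ∈ K with ‖λ‖ > 1, let f_λ(z) := z^d + λ, and for n ≥ 1 let P_n := {z ∈ K : f_λ^{∘n}(z) = z} be the (finite, cardinality d^n) set of fixed points of the n-fold iterate. Then ∑_{z∈P_n} ∑_{w∈P_n, w≠z} log‖z − w‖ = n · d^n · ((d−1)/d) · log‖λ‖. -/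
/-!
Write `f z = z ^ d + λ`. In the ultrametric norm, `f` maps the region `‖λ‖ < ‖z‖ ^ d` into
itself and strictly increases `‖z‖` there, while points with `‖z‖ ^ d < ‖λ‖` land in it after
one step; hence every periodic point satisfies `‖z‖ ^ d = ‖λ‖`. Since `P_n` has `d ^ n`
elements, it is the full root set of the monic polynomial `p = f^[n] - X`, so the inner Fekete
sum at `z` is `log ‖p'(z)‖`. By the chain rule `(f^[n])'(z) = ∏ₖ d (fᵏ z) ^ (d - 1)`, of norm
`‖λ‖ ^ (n (d - 1) / d) > 1`, and subtracting `1` does not change that norm.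
-/

open Polynomial Finset Function

theorem Function.IsPeriodicPt.notMem_of_mapsTo_of_lt {α β : Type*} [Preorder β] {f : α → α}
    {s : Set α} {φ : α → β} (hs : Set.MapsTo f s s) (hφ : ∀ x ∈ s, φ x < φ (f x))
    {n : ℕ} (hn : 0 < n) {x : α} (hx : IsPeriodicPt f n x) : x ∉ s := by
  intro hxs
  have hmono : StrictMono fun k => φ (f^[k] x) := strictMono_nat_of_lt_succ fun k => by
    rw [iterate_succ_apply']
    exact hφ _ (hs.iterate k hxs)
  have hlt : φ (f^[0] x) < φ (f^[n] x) := hmono hn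
  rw [iterate_zero_apply, hx.eq] at hlt
  exact lt_irrefl _ hlt

namespace Polynomial

variable {R : Type*}

theorem eval_derivative_iterate_comp_X [CommSemiring R] (p : R[X]) (n : ℕ) (z : R) :
    (derivative (p.comp^[n] X)).eval z
      = ∏ k ∈ range n, (derivative p).eval ((fun x => p.eval x)^[k] z) := by
  induction n with
  | zero => simp
  | succ n ih =>
    rw [iterate_succ_apply', derivative_comp, eval_mul, ih, eval_comp, iterate_comp_eval,
      eval_X, prod_range_succ]

theorem Monic.iterate_comp_X [Semiring R] [NoZeroDivisors R] {p : R[X]} (hp : p.Monic)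
    (hp0 : p.natDegree ≠ 0) (n : ℕ) : (p.comp^[n] X).Monic := by
  induction n with
  | zero => exact monic_X
  | succ n ih =>
    rw [iterate_succ_apply']
    nontriviality R
    refine hp.comp ih ?_
    rw [natDegree_iterate_comp, natDegree_X, mul_one]
    exact pow_ne_zero n hp0

theorem natDegree_iterate_comp_X_sub_X [Ring R] [NoZeroDivisors R] [Nontrivial R] {p : R[X]}
    {n : ℕ} (h : 1 < p.natDegree ^ n) : (p.comp^[n] X - X).natDegree = p.natDegree ^ n := by
  have hdeg : (p.comp^[n] X).natDegree = p.natDegree ^ n := by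
    rw [natDegree_iterate_comp, natDegree_X, mul_one]
  rw [natDegree_sub_eq_left_of_natDegree_lt, hdeg]
  rwa [hdeg, natDegree_X]

theorem Monic.iterate_comp_X_sub_X [Ring R] [NoZeroDivisors R] {p : R[X]} (hp : p.Monic) {n : ℕ}
    (h : 1 < p.natDegree ^ n) : (p.comp^[n] X - X).Monic := by
  nontriviality R
  refine (hp.iterate_comp_X ?_ n).sub_of_left (degree_lt_degree ?_)
  · rintro h0
    rcases n with _ | n <;> simp [h0] at h
  · rwa [natDegree_iterate_comp, natDegree_X, mul_one]

theorem Monic.eq_prod_X_sub_C_of_card_eq_natDegree [CommRing R] [IsDomain R] [DecidableEq R]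
    {p : R[X]} (hp : p.Monic) {s : Finset R} (hs : ∀ a ∈ s, p.IsRoot a)
    (hcard : #s = p.natDegree) : p = ∏ a ∈ s, (X - C a) := by
  have hle : s.val ≤ p.roots :=
    (Multiset.le_iff_subset s.nodup).mpr fun a ha => (mem_roots hp.ne_zero).mpr (hs a ha)
  have hroots : s.val = p.roots :=
    Multiset.eq_of_le_of_card_le hle ((card_roots' p).trans hcard.ge)
  have hprod := prod_multiset_X_sub_C_of_monic_of_roots_card_eq hp (hroots ▸ hcard)
  rw [← hroots] at hprod
  exact hprod.symm

theorem eval_derivative_prod_X_sub_C [CommRing R] [DecidableEq R] {s : Finset R} {z : R}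
    (hz : z ∈ s) : (derivative (∏ a ∈ s, (X - C a))).eval z = ∏ a ∈ s.erase z, (z - a) :=
  eval_multiset_prod_X_sub_C_derivative (S := s.val) hz

end Polynomial

theorem sum_sum_log_norm_sub_eq_sum_log_norm_eval_derivative {K : Type*} [NormedField K]
    [DecidableEq K] (s : Finset K) :
    ∑ z ∈ s, ∑ w ∈ s.erase z, Real.log ‖z - w‖
      = ∑ z ∈ s, Real.log ‖(derivative (∏ w ∈ s, (X - C w))).eval z‖ := by
  refine sum_congr rfl fun z hz => ?_
  rw [eval_derivative_prod_X_sub_C hz, norm_prod, Real.log_prod]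
  intro w hw
  simpa [sub_eq_zero] using (ne_of_mem_erase hw).symm

section Unicritical

variable {K : Type*} [NormedField K] [IsUltrametricDist K] {d : ℕ} {lam : K}

theorem norm_pow_add_eq_max {x : K} (h : ‖lam‖ ≠ ‖x‖ ^ d) :
    ‖x ^ d + lam‖ = max (‖x‖ ^ d) ‖lam‖ := by
  rw [← norm_pow]
  exact IsUltrametricDist.norm_add_eq_max_of_norm_ne_norm (by rwa [norm_pow, ne_comm])

theorem norm_pow_eq_of_isPeriodicPt (hd : 2 ≤ d) (hlam : 1 < ‖lam‖) {n : ℕ} (hn : 0 < n)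
    {z : K} (hz : IsPeriodicPt (fun w : K => w ^ d + lam) n z) : ‖z‖ ^ d = ‖lam‖ := by
  set s : Set K := {x | ‖lam‖ < ‖x‖ ^ d}
  have hgrow : ∀ x ∈ s, ‖x‖ < ‖x ^ d + lam‖ := fun x hx => by
    replace hx : ‖lam‖ < ‖x‖ ^ d := hx
    have h1 : 1 < ‖x‖ :=
      (one_lt_pow_iff_of_nonneg (norm_nonneg x) (by omega)).mp (hlam.trans hx)
    rw [norm_pow_add_eq_max hx.ne, max_eq_left hx.le]
    exact lt_self_pow₀ h1 (by omega)
  have hmaps : Set.MapsTo (fun w : K => w ^ d + lam) s s := fun x hx =>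
    (show ‖lam‖ < ‖x‖ ^ d from hx).trans
      (pow_lt_pow_left₀ (hgrow x hx) (norm_nonneg x) (by omega))
  rcases lt_trichotomy (‖z‖ ^ d) ‖lam‖ with h | h | h
  · have hfz : z ^ d + lam ∈ s := by
      show ‖lam‖ < ‖z ^ d + lam‖ ^ d
      rw [norm_pow_add_eq_max h.ne', max_eq_right h.le]
      exact lt_self_pow₀ hlam (by omega)
    exact absurd hfz (hz.apply.notMem_of_mapsTo_of_lt hmaps hgrow hn)
  · exact h
  · exact absurd h (hz.notMem_of_mapsTo_of_lt hmaps hgrow hn)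

theorem log_norm_eval_derivative_iterate_comp_X (hd : 2 ≤ d) (hdnorm : ‖(d : K)‖ = 1)
    (hlam : 1 < ‖lam‖) {n : ℕ} (hn : 0 < n) {z : K}
    (hz : IsPeriodicPt (fun w : K => w ^ d + lam) n z) :
    Real.log ‖(derivative ((X ^ d + C lam).comp^[n] X)).eval z‖
      = n * (((d : ℝ) - 1) / d) * Real.log ‖lam‖ := by
  have hfun : (fun x => (X ^ d + C lam).eval x) = fun w : K => w ^ d + lam := by
    funext x
    simp
  have hterm : ∀ k ∈ range n,
      ‖(derivative (X ^ d + C lam)).eval ((fun w : K => w ^ d + lam)^[k] z)‖ ≠ 0 ∧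
      Real.log ‖(derivative (X ^ d + C lam)).eval ((fun w : K => w ^ d + lam)^[k] z)‖
        = ((d : ℝ) - 1) / d * Real.log ‖lam‖ := by
    intro k _
    set y := (fun w : K => w ^ d + lam)^[k] z
    have hy : ‖y‖ ^ d = ‖lam‖ := norm_pow_eq_of_isPeriodicPt hd hlam hn (hz.apply_iterate k)
    have hy0 : y ≠ 0 := by
      rintro hy0
      rw [hy0, norm_zero, zero_pow (by omega)] at hy
      linarith
    have hnorm : ‖(derivative (X ^ d + C lam)).eval y‖ = ‖y‖ ^ (d - 1) := by
      simp [derivative_X_pow, hdnorm]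
    have hlog : (d : ℝ) * Real.log ‖y‖ = Real.log ‖lam‖ := by rw [← Real.log_pow, hy]
    refine ⟨by rw [hnorm]; positivity, ?_⟩
    rw [hnorm, Real.log_pow, Nat.cast_sub (by omega), Nat.cast_one, ← hlog]
    field_simp
  rw [eval_derivative_iterate_comp_X, hfun, norm_prod,
    Real.log_prod fun k hk => (hterm k hk).1, sum_congr rfl fun k hk => (hterm k hk).2,
    sum_const, card_range, nsmul_eq_mul, mul_assoc]

theorem log_norm_eval_derivative_iterate_comp_X_sub_X (hd : 2 ≤ d) (hdnorm : ‖(d : K)‖ = 1)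
    (hlam : 1 < ‖lam‖) {n : ℕ} (hn : 0 < n) {z : K}
    (hz : IsPeriodicPt (fun w : K => w ^ d + lam) n z) :
    Real.log ‖(derivative ((X ^ d + C lam).comp^[n] X - X)).eval z‖
      = n * (((d : ℝ) - 1) / d) * Real.log ‖lam‖ := by
  set D := (derivative ((X ^ d + C lam).comp^[n] X)).eval z
  have hD : Real.log ‖D‖ = n * (((d : ℝ) - 1) / d) * Real.log ‖lam‖ :=
    log_norm_eval_derivative_iterate_comp_X hd hdnorm hlam hn hz
  have hD1 : 1 < ‖D‖ := by
    rw [← Real.log_pos_iff (norm_nonneg D), hD]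
    have hd1 : (1 : ℝ) < d := by exact_mod_cast hd
    exact mul_pos (mul_pos (by exact_mod_cast hn) (div_pos (by linarith) (by linarith)))
      (Real.log_pos hlam)
  have hsub : ‖D + -1‖ = ‖D‖ := by
    rw [IsUltrametricDist.norm_add_eq_max_of_norm_ne_norm
      (by rw [norm_neg, norm_one]; exact hD1.ne'), norm_neg, norm_one, max_eq_left hD1.le]
  rw [derivative_sub, derivative_X, eval_sub, eval_one, sub_eq_add_neg, hsub, hD]

end Unicritical

theorem fekete_sum_periodic_points_general {K : Type*} [NormedField K]
    [DecidableEq K]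
    (hultra : ∀ x y : K, ‖x + y‖ ≤ max ‖x‖ ‖y‖)
    (d : ℕ) (hd : 2 ≤ d) (hdnorm : ‖(d : K)‖ = 1)
    (lam : K) (hlam : 1 < ‖lam‖) (n : ℕ) (hn : 1 ≤ n)
    (P : Finset K) (hP : ∀ z : K, z ∈ P ↔ (fun w : K => w ^ d + lam)^[n] z = z)
    (hcard : P.card = d ^ n) :
    ∑ z ∈ P, ∑ w ∈ P.erase z, Real.log ‖z - w‖
      = (n : ℝ) * (d : ℝ) ^ n * (((d : ℝ) - 1) / d) * Real.log ‖lam‖ := by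
  have : IsUltrametricDist K :=
    IsUltrametricDist.isUltrametricDist_of_forall_norm_add_le_max_norm hultra
  have hmonic : (X ^ d + C lam).Monic := monic_X_pow_add_C lam (by omega)
  have hdeg : 1 < (X ^ d + C lam).natDegree ^ n := by
    rw [natDegree_X_pow_add_C]
    exact Nat.one_lt_pow (by omega) (by omega)
  have hfactor : (X ^ d + C lam).comp^[n] X - X = ∏ w ∈ P, (X - C w) := by
    refine (hmonic.iterate_comp_X_sub_X hdeg).eq_prod_X_sub_C_of_card_eq_natDegree
      (fun z hz => ?_) ?_
    · simpa [sub_eq_zero] using (hP z).mp hz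
    · rw [hcard, natDegree_iterate_comp_X_sub_X hdeg, natDegree_X_pow_add_C]
  rw [sum_sum_log_norm_sub_eq_sum_log_norm_eval_derivative, ← hfactor,
    sum_congr rfl fun z hz =>
      log_norm_eval_derivative_iterate_comp_X_sub_X hd hdnorm hlam hn ((hP z).mp hz),
    sum_const, hcard, nsmul_eq_mul]
  push_cast
  ring

/-- The Fekete-sum computation of Section 5: for the set `P_n` (of cardinality `d^n`)
of fixed points of the `n`-fold iterate of `f_λ(z) = z^d + λ` (`d ≥ 2`, `‖(d:K)‖ = 1`,
`‖λ‖ > 1`, `K` algebraically closed nonarchimedean),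
`∑_{z∈P_n} ∑_{w∈P_n, w≠z} log‖z−w‖ = n·d^n·((d−1)/d)·log‖λ‖`. -/
theorem fekete_sum_periodic_points {K : Type*} [NormedField K] [IsAlgClosed K]
    [DecidableEq K]
    (hultra : ∀ x y : K, ‖x + y‖ ≤ max ‖x‖ ‖y‖)
    (d : ℕ) (hd : 2 ≤ d) (hdnorm : ‖(d : K)‖ = 1)
    (lam : K) (hlam : 1 < ‖lam‖) (n : ℕ) (hn : 1 ≤ n)
    (P : Finset K) (hP : ∀ z : K, z ∈ P ↔ (fun w : K => w ^ d + lam)^[n] z = z)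
    (hcard : P.card = d ^ n) :
    ∑ z ∈ P, ∑ w ∈ P.erase z, Real.log ‖z - w‖
      = (n : ℝ) * (d : ℝ) ^ n * (((d : ℝ) - 1) / d) * Real.log ‖lam‖ :=
  fekete_sum_periodic_points_general hultra d hd hdnorm lam hlam n hn P hP hcard
end

section
/- Let K be a field equipped with a multiplicative nonarchimedean (ultrametric) absolute value ‖·‖. Fix an integer d ≥ 2 and λ ∈ K with ‖λ‖ > 1, let f_λ(z) := z^d + λ, and for z, w ∈ K set [z,w] := ‖z − w‖ / (max{1,‖z‖}·max{1,‖w‖}). Then for every n ≥ 1 and all z, w ∈ K, [f_λ^{∘n}(z), f_λ^{∘n}(w)] ≤ ‖λ‖^{n(d−1)/d} · ‖λ‖^{2/d} · [z,w], where f_λ^{∘n} is the n-fold iterate and the exponents are real exponentiation. -/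
section ChordalAux

variable {K : Type*} [NormedField K]

private lemma ultra_sub (hultra : ∀ x y : K, ‖x + y‖ ≤ max ‖x‖ ‖y‖) (x y : K) :
    ‖x - y‖ ≤ max ‖x‖ ‖y‖ := by
  simpa [sub_eq_add_neg] using hultra x (-y)

private lemma ultra_eq (hultra : ∀ x y : K, ‖x + y‖ ≤ max ‖x‖ ‖y‖) {x y : K}
    (h : ‖x‖ < ‖y‖) : ‖x + y‖ = ‖y‖ := by
  refine le_antisymm ((hultra x y).trans (max_le h.le le_rfl)) ?_
  have h2 : ‖y‖ ≤ max ‖x + y‖ ‖x‖ := by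
    simpa using ultra_sub hultra (x + y) x
  exact (le_max_iff.mp h2).resolve_right (not_le.mpr h)

private lemma ultra_sum (hultra : ∀ x y : K, ‖x + y‖ ≤ max ‖x‖ ‖y‖)
    {ι : Type*} (s : Finset ι) (g : ι → K) {B : ℝ} (hB : 0 ≤ B)
    (h : ∀ i ∈ s, ‖g i‖ ≤ B) : ‖∑ i ∈ s, g i‖ ≤ B := by
  induction s using Finset.cons_induction with
  | empty => simpa
  | cons a s ha ih =>
      rw [Finset.sum_cons]
      exact (hultra _ _).trans (max_le (h a (Finset.mem_cons_self a s))
        (ih fun i hi => h i (Finset.mem_cons_of_mem hi)))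

private lemma num_bound (hultra : ∀ x y : K, ‖x + y‖ ≤ max ‖x‖ ‖y‖)
    (d : ℕ) (u v : K) :
    ‖u ^ d - v ^ d‖ ≤ (max (max 1 ‖u‖) (max 1 ‖v‖)) ^ (d - 1) * ‖u - v‖ := by
  set m := max (max 1 ‖u‖) (max 1 ‖v‖) with hm
  have hm1 : (1 : ℝ) ≤ m := le_trans (le_max_left 1 ‖u‖) (le_max_left _ _)
  have hu : ‖u‖ ≤ m := le_trans (le_max_right 1 ‖u‖) (le_max_left _ _)
  have hv : ‖v‖ ≤ m := le_trans (le_max_right 1 ‖v‖) (le_max_right _ _)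
  rw [← geom_sum₂_mul, norm_mul]
  refine mul_le_mul_of_nonneg_right ?_ (norm_nonneg _)
  refine ultra_sum hultra _ _ (by positivity) ?_
  intro i hi
  rw [Finset.mem_range] at hi
  calc ‖u ^ i * v ^ (d - 1 - i)‖ = ‖u‖ ^ i * ‖v‖ ^ (d - 1 - i) := by
        rw [norm_mul, norm_pow, norm_pow]
    _ ≤ m ^ i * m ^ (d - 1 - i) :=
        mul_le_mul (pow_le_pow_left₀ (norm_nonneg u) hu i)
          (pow_le_pow_left₀ (norm_nonneg v) hv _) (by positivity) (by positivity)
    _ = m ^ (d - 1) := by rw [← pow_add]; congr 1; omega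

end ChordalAux

/-- Chordal Lipschitz estimate for iterates of `f_λ(z) = z^d + λ` (`d ≥ 2`, `‖λ‖ > 1`,
nonarchimedean): with `[z,w] := ‖z−w‖/(max{1,‖z‖}·max{1,‖w‖})`, for all `n ≥ 1` and
`z, w ∈ K`, `[f_λ^{∘n}(z), f_λ^{∘n}(w)] ≤ ‖λ‖^{n(d−1)/d} · ‖λ‖^{2/d} · [z,w]`. -/
theorem chordal_lipschitz_iterate {K : Type*} [NormedField K]
    (hultra : ∀ x y : K, ‖x + y‖ ≤ max ‖x‖ ‖y‖)
    (d : ℕ) (hd : 2 ≤ d) (lam : K) (hlam : 1 < ‖lam‖)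
    (n : ℕ) (hn : 1 ≤ n) (z w : K) :
    ‖(fun u : K => u ^ d + lam)^[n] z - (fun u : K => u ^ d + lam)^[n] w‖ /
        (max 1 ‖(fun u : K => u ^ d + lam)^[n] z‖ *
          max 1 ‖(fun u : K => u ^ d + lam)^[n] w‖)
      ≤ ‖lam‖ ^ ((n : ℝ) * ((d : ℝ) - 1) / d) * ‖lam‖ ^ ((2 : ℝ) / d) *
          (‖z - w‖ / (max 1 ‖z‖ * max 1 ‖w‖)) := by
  set F : K → K := fun u : K => u ^ d + lam with hF
  set c : ℝ := ‖lam‖ ^ ((1 : ℝ) / d) with hc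
  have hdR : (0 : ℝ) < d := by positivity
  have hlam0 : (0 : ℝ) ≤ ‖lam‖ := norm_nonneg _
  have hc1 : (1 : ℝ) < c := by
    rw [hc]
    exact (Real.one_lt_rpow_iff_of_pos (by linarith)).mpr (Or.inl ⟨hlam, by positivity⟩)
  have hc0 : (0 : ℝ) < c := lt_trans one_pos hc1
  have hpow : ∀ k : ℕ, c ^ k = ‖lam‖ ^ ((k : ℝ) / d) := by
    intro k
    rw [hc, ← Real.rpow_natCast (‖lam‖ ^ ((1 : ℝ) / d)) k, ← Real.rpow_mul hlam0]
    congr 1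
    field_simp
  have hcd : c ^ d = ‖lam‖ := by
    rw [hpow d, div_self (ne_of_gt hdR), Real.rpow_one]
  -- norm of F at large points
  have hFlarge : ∀ x : K, c < ‖x‖ → ‖F x‖ = ‖x‖ ^ d := by
    intro x hx
    have hlt : ‖lam‖ < ‖x ^ d‖ := by
      rw [norm_pow, ← hcd]
      exact pow_lt_pow_left₀ hx hc0.le (by omega)
    have : ‖lam + x ^ d‖ = ‖x ^ d‖ := ultra_eq hultra hlt
    rw [hF]
    simpa [add_comm, norm_pow] using this
  -- the "small point" estimate
  have hsmall : ∀ v : K, max (max 1 ‖v‖) c ≤ max (max 1 ‖F v‖) c := by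
    intro v
    rcases le_or_gt ‖v‖ c with h | h
    · calc max (max 1 ‖v‖) c = c := max_eq_right (max_le hc1.le h)
        _ ≤ max (max 1 ‖F v‖) c := le_max_right _ _
    · have h1 : (1 : ℝ) < ‖v‖ := hc1.trans h
      have hFv : ‖F v‖ = ‖v‖ ^ d := hFlarge v h
      have hGv : max (max 1 ‖v‖) c = ‖v‖ := by
        rw [max_eq_right h1.le]
        exact max_eq_left h.le
      rw [hGv]
      refine le_trans ?_ (le_max_left _ _)
      refine le_trans ?_ (le_max_right 1 ‖F v‖)
      rw [hFv]
      exact le_self_pow₀ h1.le (by omega)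
  -- the "big point" estimate
  have hbig : ∀ u : K, (max 1 ‖u‖) ^ (d - 1) * max (max 1 ‖u‖) c
      ≤ c ^ (d - 1) * max (max 1 ‖F u‖) c := by
    intro u
    rcases le_or_gt ‖u‖ c with h | h
    · have hMu : max 1 ‖u‖ ≤ c := max_le hc1.le h
      calc (max 1 ‖u‖) ^ (d - 1) * max (max 1 ‖u‖) c
          ≤ c ^ (d - 1) * c :=
            mul_le_mul (pow_le_pow_left₀ (by positivity) hMu _)
              (max_le hMu le_rfl) (by positivity) (by positivity)
        _ ≤ c ^ (d - 1) * max (max 1 ‖F u‖) c :=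
            mul_le_mul_of_nonneg_left (le_max_right _ _) (by positivity)
    · have h1 : (1 : ℝ) < ‖u‖ := hc1.trans h
      have hFu : ‖F u‖ = ‖u‖ ^ d := hFlarge u h
      have hMu : max 1 ‖u‖ = ‖u‖ := max_eq_right h1.le
      have hud : c ≤ ‖u‖ ^ d := le_trans h.le (le_self_pow₀ h1.le (by omega))
      have h1d : (1 : ℝ) ≤ ‖u‖ ^ d := by
        calc (1 : ℝ) = 1 ^ d := (one_pow _).symm
          _ ≤ ‖u‖ ^ d := pow_le_pow_left₀ zero_le_one h1.le _
      have hGFu : max (max 1 ‖F u‖) c = ‖u‖ ^ d := by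
        rw [hFu, max_eq_right h1d, max_eq_left hud]
      rw [hMu, hGFu]
      have hstep : max ‖u‖ c = ‖u‖ := max_eq_left h.le
      rw [hstep]
      have hpowmul : ‖u‖ ^ (d - 1) * ‖u‖ = ‖u‖ ^ d := by
        rw [← pow_succ]
        congr 1
        omega
      rw [hpowmul]
      have hone : (1 : ℝ) ≤ c ^ (d - 1) := by
        calc (1 : ℝ) = 1 ^ (d - 1) := (one_pow _).symm
          _ ≤ c ^ (d - 1) := pow_le_pow_left₀ zero_le_one hc1.le _
      exact le_mul_of_one_le_left (by positivity) hone
  -- combined key estimate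
  have hkeyo : ∀ u v : K, max 1 ‖v‖ ≤ max 1 ‖u‖ →
      (max (max 1 ‖u‖) (max 1 ‖v‖)) ^ (d - 1) * (max (max 1 ‖u‖) c * max (max 1 ‖v‖) c)
        ≤ c ^ (d - 1) * (max (max 1 ‖F u‖) c * max (max 1 ‖F v‖) c) := by
    intro u v huv
    rw [max_eq_left huv]
    calc (max 1 ‖u‖) ^ (d - 1) * (max (max 1 ‖u‖) c * max (max 1 ‖v‖) c)
        = ((max 1 ‖u‖) ^ (d - 1) * max (max 1 ‖u‖) c) * max (max 1 ‖v‖) c := by ring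
      _ ≤ (c ^ (d - 1) * max (max 1 ‖F u‖) c) * max (max 1 ‖F v‖) c :=
          mul_le_mul (hbig u) (hsmall v) (by positivity) (by positivity)
      _ = c ^ (d - 1) * (max (max 1 ‖F u‖) c * max (max 1 ‖F v‖) c) := by ring
  have hkey : ∀ u v : K,
      (max (max 1 ‖u‖) (max 1 ‖v‖)) ^ (d - 1) * (max (max 1 ‖u‖) c * max (max 1 ‖v‖) c)
        ≤ c ^ (d - 1) * (max (max 1 ‖F u‖) c * max (max 1 ‖F v‖) c) := by
    intro u v
    rcases le_total (max 1 ‖v‖) (max 1 ‖u‖) with h | h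
    · exact hkeyo u v h
    · have := hkeyo v u h
      rw [max_comm (max 1 ‖v‖) (max 1 ‖u‖), mul_comm (max (max 1 ‖v‖) c),
        mul_comm (max (max 1 ‖F v‖) c)] at this
      exact this
  -- the main invariant
  have inv : ∀ m : ℕ, ‖F^[m] z - F^[m] w‖ * (max 1 ‖z‖ * max 1 ‖w‖) ≤
      c ^ ((d - 1) * m) *
        ((max (max 1 ‖F^[m] z‖) c * max (max 1 ‖F^[m] w‖) c) * ‖z - w‖) := by
    intro m
    induction m with
    | zero =>
      simp only [Function.iterate_zero, id_eq, Nat.mul_zero, pow_zero, one_mul]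
      calc ‖z - w‖ * (max 1 ‖z‖ * max 1 ‖w‖)
          = (max 1 ‖z‖ * max 1 ‖w‖) * ‖z - w‖ := by ring
        _ ≤ (max (max 1 ‖z‖) c * max (max 1 ‖w‖) c) * ‖z - w‖ := by
            refine mul_le_mul_of_nonneg_right ?_ (norm_nonneg _)
            exact mul_le_mul (le_max_left _ _) (le_max_left _ _) (by positivity)
              (by positivity)
    | succ m ih =>
      rw [Function.iterate_succ_apply', Function.iterate_succ_apply']
      set u := F^[m] z with hu
      set v := F^[m] w with hv
      have hnum : ‖F u - F v‖ ≤ (max (max 1 ‖u‖) (max 1 ‖v‖)) ^ (d - 1) * ‖u - v‖ := by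
        have hsub : F u - F v = u ^ d - v ^ d := by
          rw [hF]; ring
        rw [hsub]
        exact num_bound hultra d u v
      calc ‖F u - F v‖ * (max 1 ‖z‖ * max 1 ‖w‖)
          ≤ ((max (max 1 ‖u‖) (max 1 ‖v‖)) ^ (d - 1) * ‖u - v‖) *
              (max 1 ‖z‖ * max 1 ‖w‖) :=
            mul_le_mul_of_nonneg_right hnum (by positivity)
        _ = (max (max 1 ‖u‖) (max 1 ‖v‖)) ^ (d - 1) *
              (‖u - v‖ * (max 1 ‖z‖ * max 1 ‖w‖)) := by ring
        _ ≤ (max (max 1 ‖u‖) (max 1 ‖v‖)) ^ (d - 1) *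
              (c ^ ((d - 1) * m) *
                ((max (max 1 ‖u‖) c * max (max 1 ‖v‖) c) * ‖z - w‖)) :=
            mul_le_mul_of_nonneg_left ih (by positivity)
        _ = c ^ ((d - 1) * m) *
              (((max (max 1 ‖u‖) (max 1 ‖v‖)) ^ (d - 1) *
                (max (max 1 ‖u‖) c * max (max 1 ‖v‖) c)) * ‖z - w‖) := by ring
        _ ≤ c ^ ((d - 1) * m) *
              ((c ^ (d - 1) * (max (max 1 ‖F u‖) c * max (max 1 ‖F v‖) c)) * ‖z - w‖) :=
            mul_le_mul_of_nonneg_left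
              (mul_le_mul_of_nonneg_right (hkey u v) (norm_nonneg _)) (by positivity)
        _ = c ^ ((d - 1) * (m + 1)) *
              ((max (max 1 ‖F u‖) c * max (max 1 ‖F v‖) c) * ‖z - w‖) := by
            rw [Nat.mul_succ, pow_add]; ring
  -- conclude
  have hGle : ∀ x : K, max (max 1 ‖x‖) c ≤ c * max 1 ‖x‖ := by
    intro x
    exact max_le (le_mul_of_one_le_left (by positivity) hc1.le)
      (le_mul_of_one_le_right hc0.le (le_max_left _ _))
  have hconst : ‖lam‖ ^ ((n : ℝ) * ((d : ℝ) - 1) / d) * ‖lam‖ ^ ((2 : ℝ) / d)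
      = c ^ ((d - 1) * n) * c ^ 2 := by
    have e1 : (((d - 1) * n : ℕ) : ℝ) = (n : ℝ) * ((d : ℝ) - 1) := by
      push_cast [Nat.cast_sub (by omega : 1 ≤ d)]
      ring
    rw [hpow ((d - 1) * n), hpow 2, e1]
    norm_num
  rw [hconst, ← mul_div_assoc]
  rw [div_le_div_iff₀ (by positivity) (by positivity)]
  calc ‖F^[n] z - F^[n] w‖ * (max 1 ‖z‖ * max 1 ‖w‖)
      ≤ c ^ ((d - 1) * n) *
          ((max (max 1 ‖F^[n] z‖) c * max (max 1 ‖F^[n] w‖) c) * ‖z - w‖) := inv n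
    _ ≤ c ^ ((d - 1) * n) *
          (((c * max 1 ‖F^[n] z‖) * (c * max 1 ‖F^[n] w‖)) * ‖z - w‖) := by
        refine mul_le_mul_of_nonneg_left
          (mul_le_mul_of_nonneg_right
            (mul_le_mul (hGle _) (hGle _) (by positivity) (by positivity))
            (norm_nonneg _)) (by positivity)
    _ = c ^ ((d - 1) * n) * c ^ 2 * ‖z - w‖ *
          (max 1 ‖F^[n] z‖ * max 1 ‖F^[n] w‖) := by ring
end
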